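/- Suppose g and h are nondegenerate symmetric bilinear forms on a 4-dimensional real vector space whose induced Hodge star operators on 2-forms satisfy ∗_g = f ∗_h for some real scalar f. Then f = 1 and g = λ h for some nonzero real scalar λ. -/

import Mathlib

open Matrix

noncomputable section

/-- The Levi-Civita permutation symbol on four indices in `{0,1,2,3}`. -/
def eps (i j k l : Fin 4) : ℝ :=
  (((j : ℕ) : ℝ) - ((i : ℕ) : ℝ)) * (((k : ℕ) : ℝ) - ((i : ℕ) : ℝ)) *
    (((l : ℕ) : ℝ) - ((i : ℕ) : ℝ)) * (((k : ℕ) : ℝ) - ((j : ℕ) : ℝ)) *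
    (((l : ℕ) : ℝ) - ((j : ℕ) : ℝ)) * (((l : ℕ) : ℝ) - ((k : ℕ) : ℝ)) / 12

/-- The Hodge star operator of a nondegenerate symmetric bilinear form `g` on
`ℝ⁴`, acting on a 2-form `u` (represented by its antisymmetric component matrix
`u_{rs}`):  `(∗_g u)_{ij} = ½ κ^{rs}_{ij} u_{rs}` with
`κ^{rs}_{ij} = √|det g| g^{ra} g^{sb} ε_{abij}`. -/
def hodge (g u : Matrix (Fin 4) (Fin 4) ℝ) : Matrix (Fin 4) (Fin 4) ℝ :=
  Matrix.of fun i j =>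
    (1 / 2) * ∑ r : Fin 4, ∑ s : Fin 4,
      (Real.sqrt |g.det| * ∑ a : Fin 4, ∑ b : Fin 4,
        g⁻¹ r a * g⁻¹ s b * eps a b i j) * u r s

/-- Elementary antisymmetric matrices used as test 2-forms. -/
def uu (p q : Fin 4) : Matrix (Fin 4) (Fin 4) ℝ :=
  Matrix.of fun r s => (if r = p then if s = q then (1:ℝ) else 0 else 0)
    - (if r = q then if s = p then (1:ℝ) else 0 else 0)

lemma uu_anti (p q : Fin 4) : (uu p q)ᵀ = -(uu p q) := by
  ext r s
  simp only [Matrix.transpose_apply, Matrix.neg_apply, uu, Matrix.of_apply]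
  split_ifs <;> simp_all

lemma sum_uu (F : Fin 4 → Fin 4 → ℝ) (p q : Fin 4) :
    ∑ r : Fin 4, ∑ s : Fin 4, F r s * uu p q r s = F p q - F q p := by
  simp [uu, mul_sub, Finset.sum_sub_distrib, mul_ite, mul_one, mul_zero,
    Finset.sum_ite_eq', Finset.sum_ite_eq]

lemma detfour (A : Matrix (Fin 4) (Fin 4) ℝ) : A.det =
    A 0 0*A 1 1*A 2 2*A 3 3 - A 0 0*A 1 1*A 2 3*A 3 2 - A 0 0*A 1 2*A 2 1*A 3 3 + A 0 0*A 1 2*A 2 3*A 3 1 + A 0 0*A 1 3*A 2 1*A 3 2 - A 0 0*A 1 3*A 2 2*A 3 1 - A 0 1*A 1 0*A 2 2*A 3 3 + A 0 1*A 1 0*A 2 3*A 3 2 + A 0 1*A 1 2*A 2 0*A 3 3 - A 0 1*A 1 2*A 2 3*A 3 0 - A 0 1*A 1 3*A 2 0*A 3 2 + A 0 1*A 1 3*A 2 2*A 3 0 + A 0 2*A 1 0*A 2 1*A 3 3 - A 0 2*A 1 0*A 2 3*A 3 1 - A 0 2*A 1 1*A 2 0*A 3 3 + A 0 2*A 1 1*A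 2 3*A 3 0 + A 0 2*A 1 3*A 2 0*A 3 1 - A 0 2*A 1 3*A 2 1*A 3 0 - A 0 3*A 1 0*A 2 1*A 3 2 + A 0 3*A 1 0*A 2 2*A 3 1 + A 0 3*A 1 1*A 2 0*A 3 2 - A 0 3*A 1 1*A 2 2*A 3 0 - A 0 3*A 1 2*A 2 0*A 3 1 + A 0 3*A 1 2*A 2 1*A 3 0 := by
  have e1 : (Fin.succ 0 : Fin 4) = 1 := rfl
  have e2 : (Fin.succ 1 : Fin 4) = 2 := rfl
  have e3 : (Fin.succ 2 : Fin 4) = 3 := rfl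
  simp [Matrix.det_succ_row_zero, Fin.sum_univ_succ, Fin.succAbove, Fin.castSucc,
    Fin.castAdd, Fin.castLE, e1, e2, e3]
  ring

lemma cancel0 {a x y : ℝ} (ha : a ≠ 0) (hxy : a * (x - y) = 0) : x = y := by
  have := (mul_eq_zero.mp hxy).resolve_left ha
  linarith

lemma offdiag_aux {a c x krr kss krs ksr kir kis krj ksj : ℝ} (hc : c ≠ 0)
    (e1 : x * krs = kis * krj) (e2 : x * ksr = kir * ksj)
    (e3 : x * krr = kir * krj) (e4 : x * kss = kis * ksj)
    (e5 : a * (krr * kss - krs * ksr) = c) : x = 0 := by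
  have key : x ^ 2 * c = 0 := by
    linear_combination a * x * kss * e3 + a * kir * krj * e4 - a * x * ksr * e1
      - a * kis * krj * e2 - x ^ 2 * e5
  have h2 : x ^ 2 = 0 := (mul_eq_zero.mp key).resolve_right hc
  exact pow_eq_zero_iff two_ne_zero |>.mp h2

lemma sum23 (X Y : Fin 4 → ℝ) :
    ∑ a : Fin 4, ∑ b : Fin 4, X a * Y b * eps a b 2 3 = X 0 * Y 1 - X 1 * Y 0 := by
  simp only [Fin.sum_univ_four]
  norm_num [eps, show ((3:Fin 4):ℕ) = 3 from rfl]
  try ring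

lemma sum13 (X Y : Fin 4 → ℝ) :
    ∑ a : Fin 4, ∑ b : Fin 4, X a * Y b * eps a b 1 3 = X 2 * Y 0 - X 0 * Y 2 := by
  simp only [Fin.sum_univ_four]
  norm_num [eps, show ((3:Fin 4):ℕ) = 3 from rfl]
  try ring

lemma sum12 (X Y : Fin 4 → ℝ) :
    ∑ a : Fin 4, ∑ b : Fin 4, X a * Y b * eps a b 1 2 = X 0 * Y 3 - X 3 * Y 0 := by
  simp only [Fin.sum_univ_four]
  norm_num [eps, show ((3:Fin 4):ℕ) = 3 from rfl]
  try ring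

lemma sum03 (X Y : Fin 4 → ℝ) :
    ∑ a : Fin 4, ∑ b : Fin 4, X a * Y b * eps a b 0 3 = X 1 * Y 2 - X 2 * Y 1 := by
  simp only [Fin.sum_univ_four]
  norm_num [eps, show ((3:Fin 4):ℕ) = 3 from rfl]
  try ring

lemma sum02 (X Y : Fin 4 → ℝ) :
    ∑ a : Fin 4, ∑ b : Fin 4, X a * Y b * eps a b 0 2 = X 3 * Y 1 - X 1 * Y 3 := by
  simp only [Fin.sum_univ_four]
  norm_num [eps, show ((3:Fin 4):ℕ) = 3 from rfl]
  try ring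

lemma sum01 (X Y : Fin 4 → ℝ) :
    ∑ a : Fin 4, ∑ b : Fin 4, X a * Y b * eps a b 0 1 = X 2 * Y 3 - X 3 * Y 2 := by
  simp only [Fin.sum_univ_four]
  norm_num [eps, show ((3:Fin 4):ℕ) = 3 from rfl]
  try ring

lemma cauchy_binet (A B C : Matrix (Fin 4) (Fin 4) ℝ) (al t : ℝ)
    (hBC : B * C = 1)
    (hE : ∀ p q u v : Fin 4,
      al * (A p u * A q v - A p v * A q u) = t * (B p u * B q v - B p v * B q u)) :
    ∀ p q u v : Fin 4,
      al * ((A * C) p u * (A * C) q v - (A * C) p v * (A * C) q u)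
        = t * ((if p = u then (1:ℝ) else 0) * (if q = v then (1:ℝ) else 0)
            - (if p = v then (1:ℝ) else 0) * (if q = u then (1:ℝ) else 0)) := by
  have hF : ∀ x y : Fin 4,
      B x 0 * C 0 y + B x 1 * C 1 y + B x 2 * C 2 y + B x 3 * C 3 y
        = (if x = y then (1:ℝ) else 0) := by
    intro x y
    have hxy := congrFun (congrFun hBC x) y
    simp only [Matrix.mul_apply, Fin.sum_univ_four, Matrix.one_apply] at hxy
    exact hxy
  intro p q u v
  simp only [Matrix.mul_apply, Fin.sum_univ_four]
  linear_combination
    C 0 u * C 1 v * hE p q 0 1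
        + C 0 u * C 2 v * hE p q 0 2
        + C 0 u * C 3 v * hE p q 0 3
        + C 1 u * C 0 v * hE p q 1 0
        + C 1 u * C 2 v * hE p q 1 2
        + C 1 u * C 3 v * hE p q 1 3
        + C 2 u * C 0 v * hE p q 2 0
        + C 2 u * C 1 v * hE p q 2 1
        + C 2 u * C 3 v * hE p q 2 3
        + C 3 u * C 0 v * hE p q 3 0
        + C 3 u * C 1 v * hE p q 3 1
        + C 3 u * C 2 v * hE p q 3 2
        + t * (B q 0 * C 0 v + B q 1 * C 1 v + B q 2 * C 2 v + B q 3 * C 3 v) * hF p u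
        + t * (if p = u then (1:ℝ) else 0) * hF q v
        - (t * (B q 0 * C 0 u + B q 1 * C 1 u + B q 2 * C 2 u + B q 3 * C 3 u) * hF p v)
        - (t * (if p = v then (1:ℝ) else 0) * hF q u)

/-- If the Hodge stars of two nondegenerate symmetric bilinear forms `g, h` on
an oriented 4-dimensional space satisfy `∗_g = f ∗_h` on 2-forms, then `f = 1`
and `g = λ h` for some nonzero scalar `λ`. -/
theorem hodge_conformal (g h : Matrix (Fin 4) (Fin 4) ℝ)
    (hgs : g.IsSymm) (hhs : h.IsSymm) (hgd : g.det ≠ 0) (hhd : h.det ≠ 0)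
    (f : ℝ)
    (hstar : ∀ u : Matrix (Fin 4) (Fin 4) ℝ, uᵀ = -u → hodge g u = f • hodge h u) :
    f = 1 ∧ ∃ lam : ℝ, lam ≠ 0 ∧ g = lam • h := by
  have apos : 0 < Real.sqrt |g.det| := Real.sqrt_pos.mpr (abs_pos.mpr hgd)
  have bpos : 0 < Real.sqrt |h.det| := Real.sqrt_pos.mpr (abs_pos.mpr hhd)
  have ane : Real.sqrt |g.det| ≠ 0 := ne_of_gt apos
  have bne : Real.sqrt |h.det| ≠ 0 := ne_of_gt bpos
  have hE' : ∀ p q i j : Fin 4,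
      (1/2) * ((Real.sqrt |g.det| * ∑ a : Fin 4, ∑ b : Fin 4, g⁻¹ p a * g⁻¹ q b * eps a b i j)
        - (Real.sqrt |g.det| * ∑ a : Fin 4, ∑ b : Fin 4, g⁻¹ q a * g⁻¹ p b * eps a b i j))
      = f * ((1/2) * ((Real.sqrt |h.det| * ∑ a : Fin 4, ∑ b : Fin 4, h⁻¹ p a * h⁻¹ q b * eps a b i j)
        - (Real.sqrt |h.det| * ∑ a : Fin 4, ∑ b : Fin 4, h⁻¹ q a * h⁻¹ p b * eps a b i j))) := by
    intro p q i j
    have hh := congrFun (congrFun (hstar (uu p q) (uu_anti p q)) i) j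
    simp only [hodge, Matrix.of_apply, Matrix.smul_apply, smul_eq_mul] at hh
    rw [sum_uu, sum_uu] at hh
    exact hh
  have hE2 : ∀ p q u v : Fin 4,
      Real.sqrt |g.det| * (g⁻¹ p u * g⁻¹ q v - g⁻¹ p v * g⁻¹ q u)
        = f * Real.sqrt |h.det| * (h⁻¹ p u * h⁻¹ q v - h⁻¹ p v * h⁻¹ q u) := by
    intro p q u v
    have t23 := hE' p q 2 3
    rw [sum23 (fun a => g⁻¹ p a) (fun b => g⁻¹ q b), sum23 (fun a => g⁻¹ q a) (fun b => g⁻¹ p b),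
        sum23 (fun a => h⁻¹ p a) (fun b => h⁻¹ q b), sum23 (fun a => h⁻¹ q a) (fun b => h⁻¹ p b)] at t23
    have t13 := hE' p q 1 3
    rw [sum13 (fun a => g⁻¹ p a) (fun b => g⁻¹ q b), sum13 (fun a => g⁻¹ q a) (fun b => g⁻¹ p b),
        sum13 (fun a => h⁻¹ p a) (fun b => h⁻¹ q b), sum13 (fun a => h⁻¹ q a) (fun b => h⁻¹ p b)] at t13
    have t12 := hE' p q 1 2
    rw [sum12 (fun a => g⁻¹ p a) (fun b => g⁻¹ q b), sum12 (fun a => g⁻¹ q a) (fun b => g⁻¹ p b),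
        sum12 (fun a => h⁻¹ p a) (fun b => h⁻¹ q b), sum12 (fun a => h⁻¹ q a) (fun b => h⁻¹ p b)] at t12
    have t03 := hE' p q 0 3
    rw [sum03 (fun a => g⁻¹ p a) (fun b => g⁻¹ q b), sum03 (fun a => g⁻¹ q a) (fun b => g⁻¹ p b),
        sum03 (fun a => h⁻¹ p a) (fun b => h⁻¹ q b), sum03 (fun a => h⁻¹ q a) (fun b => h⁻¹ p b)] at t03
    have t02 := hE' p q 0 2
    rw [sum02 (fun a => g⁻¹ p a) (fun b => g⁻¹ q b), sum02 (fun a => g⁻¹ q a) (fun b => g⁻¹ p b),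
        sum02 (fun a => h⁻¹ p a) (fun b => h⁻¹ q b), sum02 (fun a => h⁻¹ q a) (fun b => h⁻¹ p b)] at t02
    have t01 := hE' p q 0 1
    rw [sum01 (fun a => g⁻¹ p a) (fun b => g⁻¹ q b), sum01 (fun a => g⁻¹ q a) (fun b => g⁻¹ p b),
        sum01 (fun a => h⁻¹ p a) (fun b => h⁻¹ q b), sum01 (fun a => h⁻¹ q a) (fun b => h⁻¹ p b)] at t01
    fin_cases u <;> fin_cases v
    · ring
    · exact (by linear_combination t23 : Real.sqrt |g.det| * (g⁻¹ p 0 * g⁻¹ q 1 - g⁻¹ p 1 * g⁻¹ q 0) = f * Real.sqrt |h.det| * (h⁻¹ p 0 * h⁻¹ q 1 - h⁻¹ p 1 * h⁻¹ q 0))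
    · exact (by linear_combination -t13 : Real.sqrt |g.det| * (g⁻¹ p 0 * g⁻¹ q 2 - g⁻¹ p 2 * g⁻¹ q 0) = f * Real.sqrt |h.det| * (h⁻¹ p 0 * h⁻¹ q 2 - h⁻¹ p 2 * h⁻¹ q 0))
    · exact (by linear_combination t12 : Real.sqrt |g.det| * (g⁻¹ p 0 * g⁻¹ q 3 - g⁻¹ p 3 * g⁻¹ q 0) = f * Real.sqrt |h.det| * (h⁻¹ p 0 * h⁻¹ q 3 - h⁻¹ p 3 * h⁻¹ q 0))
    · exact (by linear_combination -t23 : Real.sqrt |g.det| * (g⁻¹ p 1 * g⁻¹ q 0 - g⁻¹ p 0 * g⁻¹ q 1) = f * Real.sqrt |h.det| * (h⁻¹ p 1 * h⁻¹ q 0 - h⁻¹ p 0 * h⁻¹ q 1))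
    · ring
    · exact (by linear_combination t03 : Real.sqrt |g.det| * (g⁻¹ p 1 * g⁻¹ q 2 - g⁻¹ p 2 * g⁻¹ q 1) = f * Real.sqrt |h.det| * (h⁻¹ p 1 * h⁻¹ q 2 - h⁻¹ p 2 * h⁻¹ q 1))
    · exact (by linear_combination -t02 : Real.sqrt |g.det| * (g⁻¹ p 1 * g⁻¹ q 3 - g⁻¹ p 3 * g⁻¹ q 1) = f * Real.sqrt |h.det| * (h⁻¹ p 1 * h⁻¹ q 3 - h⁻¹ p 3 * h⁻¹ q 1))
    · exact (by linear_combination t13 : Real.sqrt |g.det| * (g⁻¹ p 2 * g⁻¹ q 0 - g⁻¹ p 0 * g⁻¹ q 2) = f * Real.sqrt |h.det| * (h⁻¹ p 2 * h⁻¹ q 0 - h⁻¹ p 0 * h⁻¹ q 2))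
    · exact (by linear_combination -t03 : Real.sqrt |g.det| * (g⁻¹ p 2 * g⁻¹ q 1 - g⁻¹ p 1 * g⁻¹ q 2) = f * Real.sqrt |h.det| * (h⁻¹ p 2 * h⁻¹ q 1 - h⁻¹ p 1 * h⁻¹ q 2))
    · ring
    · exact (by linear_combination t01 : Real.sqrt |g.det| * (g⁻¹ p 2 * g⁻¹ q 3 - g⁻¹ p 3 * g⁻¹ q 2) = f * Real.sqrt |h.det| * (h⁻¹ p 2 * h⁻¹ q 3 - h⁻¹ p 3 * h⁻¹ q 2))
    · exact (by linear_combination -t12 : Real.sqrt |g.det| * (g⁻¹ p 3 * g⁻¹ q 0 - g⁻¹ p 0 * g⁻¹ q 3) = f * Real.sqrt |h.det| * (h⁻¹ p 3 * h⁻¹ q 0 - h⁻¹ p 0 * h⁻¹ q 3))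
    · exact (by linear_combination t02 : Real.sqrt |g.det| * (g⁻¹ p 3 * g⁻¹ q 1 - g⁻¹ p 1 * g⁻¹ q 3) = f * Real.sqrt |h.det| * (h⁻¹ p 3 * h⁻¹ q 1 - h⁻¹ p 1 * h⁻¹ q 3))
    · exact (by linear_combination -t01 : Real.sqrt |g.det| * (g⁻¹ p 3 * g⁻¹ q 2 - g⁻¹ p 2 * g⁻¹ q 3) = f * Real.sqrt |h.det| * (h⁻¹ p 3 * h⁻¹ q 2 - h⁻¹ p 2 * h⁻¹ q 3))
    · ring
  have hR := cauchy_binet g⁻¹ h⁻¹ h (Real.sqrt |g.det|) (f * Real.sqrt |h.det|)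
    (Matrix.nonsing_inv_mul h (isUnit_iff_ne_zero.mpr hhd)) hE2
  set K := g⁻¹ * h with hKdef
  have hdetK : K.det ≠ 0 := by
    rw [hKdef, Matrix.det_mul, Matrix.det_nonsing_inv, Ring.inverse_eq_inv']
    exact mul_ne_zero (inv_ne_zero hgd) hhd
  have hf : f ≠ 0 := by
    intro hf0
    apply hdetK
    have z01 : K 0 0 * K 1 1 = K 0 1 * K 1 0 := by
      have hz := hR 0 1 0 1
      rw [hf0] at hz
      exact cancel0 ane (by linear_combination hz)
    have z02 : K 0 0 * K 1 2 = K 0 2 * K 1 0 := by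
      have hz := hR 0 1 0 2
      rw [hf0] at hz
      exact cancel0 ane (by linear_combination hz)
    have z03 : K 0 0 * K 1 3 = K 0 3 * K 1 0 := by
      have hz := hR 0 1 0 3
      rw [hf0] at hz
      exact cancel0 ane (by linear_combination hz)
    have z12 : K 0 1 * K 1 2 = K 0 2 * K 1 1 := by
      have hz := hR 0 1 1 2
      rw [hf0] at hz
      exact cancel0 ane (by linear_combination hz)
    have z13 : K 0 1 * K 1 3 = K 0 3 * K 1 1 := by
      have hz := hR 0 1 1 3
      rw [hf0] at hz
      exact cancel0 ane (by linear_combination hz)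
    have z23 : K 0 2 * K 1 3 = K 0 3 * K 1 2 := by
      have hz := hR 0 1 2 3
      rw [hf0] at hz
      exact cancel0 ane (by linear_combination hz)
    rw [detfour]
    linear_combination (K 2 2 * K 3 3 - K 2 3 * K 3 2) * z01 - (K 2 1 * K 3 3 - K 2 3 * K 3 1) * z02 + (K 2 1 * K 3 2 - K 2 2 * K 3 1) * z03 + (K 2 0 * K 3 3 - K 2 3 * K 3 0) * z12 - (K 2 0 * K 3 2 - K 2 2 * K 3 0) * z13 + (K 2 0 * K 3 1 - K 2 1 * K 3 0) * z23
  have o01 : K 0 1 = 0 := by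
    have e1 : K 0 1 * K 2 3 = K 0 3 * K 2 1 := cancel0 ane (by have hz := hR 0 2 1 3; simp only [Fin.reduceEq, reduceIte] at hz; linear_combination hz)
    have e2 : K 0 1 * K 3 2 = K 0 2 * K 3 1 := cancel0 ane (by have hz := hR 0 3 1 2; simp only [Fin.reduceEq, reduceIte] at hz; linear_combination hz)
    have e3 : K 0 1 * K 2 2 = K 0 2 * K 2 1 := cancel0 ane (by have hz := hR 0 2 1 2; simp only [Fin.reduceEq, reduceIte] at hz; linear_combination hz)
    have e4 : K 0 1 * K 3 3 = K 0 3 * K 3 1 := cancel0 ane (by have hz := hR 0 3 1 3; simp only [Fin.reduceEq, reduceIte] at hz; linear_combination hz)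
    have e5 : Real.sqrt |g.det| * (K 2 2 * K 3 3 - K 2 3 * K 3 2) = f * Real.sqrt |h.det| := by
      have hz := hR 2 3 2 3; simp only [Fin.reduceEq, reduceIte] at hz; linear_combination hz
    exact offdiag_aux (mul_ne_zero hf bne) e1 e2 e3 e4 e5
  have o02 : K 0 2 = 0 := by
    have e1 : K 0 2 * K 1 3 = K 0 3 * K 1 2 := cancel0 ane (by have hz := hR 0 1 2 3; simp only [Fin.reduceEq, reduceIte] at hz; linear_combination hz)
    have e2 : K 0 2 * K 3 1 = K 0 1 * K 3 2 := cancel0 ane (by have hz := hR 0 3 2 1; simp only [Fin.reduceEq, reduceIte] at hz; linear_combination hz)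
    have e3 : K 0 2 * K 1 1 = K 0 1 * K 1 2 := cancel0 ane (by have hz := hR 0 1 2 1; simp only [Fin.reduceEq, reduceIte] at hz; linear_combination hz)
    have e4 : K 0 2 * K 3 3 = K 0 3 * K 3 2 := cancel0 ane (by have hz := hR 0 3 2 3; simp only [Fin.reduceEq, reduceIte] at hz; linear_combination hz)
    have e5 : Real.sqrt |g.det| * (K 1 1 * K 3 3 - K 1 3 * K 3 1) = f * Real.sqrt |h.det| := by
      have hz := hR 1 3 1 3; simp only [Fin.reduceEq, reduceIte] at hz; linear_combination hz
    exact offdiag_aux (mul_ne_zero hf bne) e1 e2 e3 e4 e5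
  have o03 : K 0 3 = 0 := by
    have e1 : K 0 3 * K 1 2 = K 0 2 * K 1 3 := cancel0 ane (by have hz := hR 0 1 3 2; simp only [Fin.reduceEq, reduceIte] at hz; linear_combination hz)
    have e2 : K 0 3 * K 2 1 = K 0 1 * K 2 3 := cancel0 ane (by have hz := hR 0 2 3 1; simp only [Fin.reduceEq, reduceIte] at hz; linear_combination hz)
    have e3 : K 0 3 * K 1 1 = K 0 1 * K 1 3 := cancel0 ane (by have hz := hR 0 1 3 1; simp only [Fin.reduceEq, reduceIte] at hz; linear_combination hz)
    have e4 : K 0 3 * K 2 2 = K 0 2 * K 2 3 := cancel0 ane (by have hz := hR 0 2 3 2; simp only [Fin.reduceEq, reduceIte] at hz; linear_combination hz)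
    have e5 : Real.sqrt |g.det| * (K 1 1 * K 2 2 - K 1 2 * K 2 1) = f * Real.sqrt |h.det| := by
      have hz := hR 1 2 1 2; simp only [Fin.reduceEq, reduceIte] at hz; linear_combination hz
    exact offdiag_aux (mul_ne_zero hf bne) e1 e2 e3 e4 e5
  have o10 : K 1 0 = 0 := by
    have e1 : K 1 0 * K 2 3 = K 1 3 * K 2 0 := cancel0 ane (by have hz := hR 1 2 0 3; simp only [Fin.reduceEq, reduceIte] at hz; linear_combination hz)
    have e2 : K 1 0 * K 3 2 = K 1 2 * K 3 0 := cancel0 ane (by have hz := hR 1 3 0 2; simp only [Fin.reduceEq, reduceIte] at hz; linear_combination hz)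
    have e3 : K 1 0 * K 2 2 = K 1 2 * K 2 0 := cancel0 ane (by have hz := hR 1 2 0 2; simp only [Fin.reduceEq, reduceIte] at hz; linear_combination hz)
    have e4 : K 1 0 * K 3 3 = K 1 3 * K 3 0 := cancel0 ane (by have hz := hR 1 3 0 3; simp only [Fin.reduceEq, reduceIte] at hz; linear_combination hz)
    have e5 : Real.sqrt |g.det| * (K 2 2 * K 3 3 - K 2 3 * K 3 2) = f * Real.sqrt |h.det| := by
      have hz := hR 2 3 2 3; simp only [Fin.reduceEq, reduceIte] at hz; linear_combination hz
    exact offdiag_aux (mul_ne_zero hf bne) e1 e2 e3 e4 e5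
  have o12 : K 1 2 = 0 := by
    have e1 : K 1 2 * K 0 3 = K 1 3 * K 0 2 := cancel0 ane (by have hz := hR 1 0 2 3; simp only [Fin.reduceEq, reduceIte] at hz; linear_combination hz)
    have e2 : K 1 2 * K 3 0 = K 1 0 * K 3 2 := cancel0 ane (by have hz := hR 1 3 2 0; simp only [Fin.reduceEq, reduceIte] at hz; linear_combination hz)
    have e3 : K 1 2 * K 0 0 = K 1 0 * K 0 2 := cancel0 ane (by have hz := hR 1 0 2 0; simp only [Fin.reduceEq, reduceIte] at hz; linear_combination hz)
    have e4 : K 1 2 * K 3 3 = K 1 3 * K 3 2 := cancel0 ane (by have hz := hR 1 3 2 3; simp only [Fin.reduceEq, reduceIte] at hz; linear_combination hz)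
    have e5 : Real.sqrt |g.det| * (K 0 0 * K 3 3 - K 0 3 * K 3 0) = f * Real.sqrt |h.det| := by
      have hz := hR 0 3 0 3; simp only [Fin.reduceEq, reduceIte] at hz; linear_combination hz
    exact offdiag_aux (mul_ne_zero hf bne) e1 e2 e3 e4 e5
  have o13 : K 1 3 = 0 := by
    have e1 : K 1 3 * K 0 2 = K 1 2 * K 0 3 := cancel0 ane (by have hz := hR 1 0 3 2; simp only [Fin.reduceEq, reduceIte] at hz; linear_combination hz)
    have e2 : K 1 3 * K 2 0 = K 1 0 * K 2 3 := cancel0 ane (by have hz := hR 1 2 3 0; simp only [Fin.reduceEq, reduceIte] at hz; linear_combination hz)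
    have e3 : K 1 3 * K 0 0 = K 1 0 * K 0 3 := cancel0 ane (by have hz := hR 1 0 3 0; simp only [Fin.reduceEq, reduceIte] at hz; linear_combination hz)
    have e4 : K 1 3 * K 2 2 = K 1 2 * K 2 3 := cancel0 ane (by have hz := hR 1 2 3 2; simp only [Fin.reduceEq, reduceIte] at hz; linear_combination hz)
    have e5 : Real.sqrt |g.det| * (K 0 0 * K 2 2 - K 0 2 * K 2 0) = f * Real.sqrt |h.det| := by
      have hz := hR 0 2 0 2; simp only [Fin.reduceEq, reduceIte] at hz; linear_combination hz
    exact offdiag_aux (mul_ne_zero hf bne) e1 e2 e3 e4 e5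
  have o20 : K 2 0 = 0 := by
    have e1 : K 2 0 * K 1 3 = K 2 3 * K 1 0 := cancel0 ane (by have hz := hR 2 1 0 3; simp only [Fin.reduceEq, reduceIte] at hz; linear_combination hz)
    have e2 : K 2 0 * K 3 1 = K 2 1 * K 3 0 := cancel0 ane (by have hz := hR 2 3 0 1; simp only [Fin.reduceEq, reduceIte] at hz; linear_combination hz)
    have e3 : K 2 0 * K 1 1 = K 2 1 * K 1 0 := cancel0 ane (by have hz := hR 2 1 0 1; simp only [Fin.reduceEq, reduceIte] at hz; linear_combination hz)
    have e4 : K 2 0 * K 3 3 = K 2 3 * K 3 0 := cancel0 ane (by have hz := hR 2 3 0 3; simp only [Fin.reduceEq, reduceIte] at hz; linear_combination hz)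
    have e5 : Real.sqrt |g.det| * (K 1 1 * K 3 3 - K 1 3 * K 3 1) = f * Real.sqrt |h.det| := by
      have hz := hR 1 3 1 3; simp only [Fin.reduceEq, reduceIte] at hz; linear_combination hz
    exact offdiag_aux (mul_ne_zero hf bne) e1 e2 e3 e4 e5
  have o21 : K 2 1 = 0 := by
    have e1 : K 2 1 * K 0 3 = K 2 3 * K 0 1 := cancel0 ane (by have hz := hR 2 0 1 3; simp only [Fin.reduceEq, reduceIte] at hz; linear_combination hz)
    have e2 : K 2 1 * K 3 0 = K 2 0 * K 3 1 := cancel0 ane (by have hz := hR 2 3 1 0; simp only [Fin.reduceEq, reduceIte] at hz; linear_combination hz)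
    have e3 : K 2 1 * K 0 0 = K 2 0 * K 0 1 := cancel0 ane (by have hz := hR 2 0 1 0; simp only [Fin.reduceEq, reduceIte] at hz; linear_combination hz)
    have e4 : K 2 1 * K 3 3 = K 2 3 * K 3 1 := cancel0 ane (by have hz := hR 2 3 1 3; simp only [Fin.reduceEq, reduceIte] at hz; linear_combination hz)
    have e5 : Real.sqrt |g.det| * (K 0 0 * K 3 3 - K 0 3 * K 3 0) = f * Real.sqrt |h.det| := by
      have hz := hR 0 3 0 3; simp only [Fin.reduceEq, reduceIte] at hz; linear_combination hz
    exact offdiag_aux (mul_ne_zero hf bne) e1 e2 e3 e4 e5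
  have o23 : K 2 3 = 0 := by
    have e1 : K 2 3 * K 0 1 = K 2 1 * K 0 3 := cancel0 ane (by have hz := hR 2 0 3 1; simp only [Fin.reduceEq, reduceIte] at hz; linear_combination hz)
    have e2 : K 2 3 * K 1 0 = K 2 0 * K 1 3 := cancel0 ane (by have hz := hR 2 1 3 0; simp only [Fin.reduceEq, reduceIte] at hz; linear_combination hz)
    have e3 : K 2 3 * K 0 0 = K 2 0 * K 0 3 := cancel0 ane (by have hz := hR 2 0 3 0; simp only [Fin.reduceEq, reduceIte] at hz; linear_combination hz)
    have e4 : K 2 3 * K 1 1 = K 2 1 * K 1 3 := cancel0 ane (by have hz := hR 2 1 3 1; simp only [Fin.reduceEq, reduceIte] at hz; linear_combination hz)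
    have e5 : Real.sqrt |g.det| * (K 0 0 * K 1 1 - K 0 1 * K 1 0) = f * Real.sqrt |h.det| := by
      have hz := hR 0 1 0 1; simp only [Fin.reduceEq, reduceIte] at hz; linear_combination hz
    exact offdiag_aux (mul_ne_zero hf bne) e1 e2 e3 e4 e5
  have o30 : K 3 0 = 0 := by
    have e1 : K 3 0 * K 1 2 = K 3 2 * K 1 0 := cancel0 ane (by have hz := hR 3 1 0 2; simp only [Fin.reduceEq, reduceIte] at hz; linear_combination hz)
    have e2 : K 3 0 * K 2 1 = K 3 1 * K 2 0 := cancel0 ane (by have hz := hR 3 2 0 1; simp only [Fin.reduceEq, reduceIte] at hz; linear_combination hz)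
    have e3 : K 3 0 * K 1 1 = K 3 1 * K 1 0 := cancel0 ane (by have hz := hR 3 1 0 1; simp only [Fin.reduceEq, reduceIte] at hz; linear_combination hz)
    have e4 : K 3 0 * K 2 2 = K 3 2 * K 2 0 := cancel0 ane (by have hz := hR 3 2 0 2; simp only [Fin.reduceEq, reduceIte] at hz; linear_combination hz)
    have e5 : Real.sqrt |g.det| * (K 1 1 * K 2 2 - K 1 2 * K 2 1) = f * Real.sqrt |h.det| := by
      have hz := hR 1 2 1 2; simp only [Fin.reduceEq, reduceIte] at hz; linear_combination hz
    exact offdiag_aux (mul_ne_zero hf bne) e1 e2 e3 e4 e5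
  have o31 : K 3 1 = 0 := by
    have e1 : K 3 1 * K 0 2 = K 3 2 * K 0 1 := cancel0 ane (by have hz := hR 3 0 1 2; simp only [Fin.reduceEq, reduceIte] at hz; linear_combination hz)
    have e2 : K 3 1 * K 2 0 = K 3 0 * K 2 1 := cancel0 ane (by have hz := hR 3 2 1 0; simp only [Fin.reduceEq, reduceIte] at hz; linear_combination hz)
    have e3 : K 3 1 * K 0 0 = K 3 0 * K 0 1 := cancel0 ane (by have hz := hR 3 0 1 0; simp only [Fin.reduceEq, reduceIte] at hz; linear_combination hz)
    have e4 : K 3 1 * K 2 2 = K 3 2 * K 2 1 := cancel0 ane (by have hz := hR 3 2 1 2; simp only [Fin.reduceEq, reduceIte] at hz; linear_combination hz)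
    have e5 : Real.sqrt |g.det| * (K 0 0 * K 2 2 - K 0 2 * K 2 0) = f * Real.sqrt |h.det| := by
      have hz := hR 0 2 0 2; simp only [Fin.reduceEq, reduceIte] at hz; linear_combination hz
    exact offdiag_aux (mul_ne_zero hf bne) e1 e2 e3 e4 e5
  have o32 : K 3 2 = 0 := by
    have e1 : K 3 2 * K 0 1 = K 3 1 * K 0 2 := cancel0 ane (by have hz := hR 3 0 2 1; simp only [Fin.reduceEq, reduceIte] at hz; linear_combination hz)
    have e2 : K 3 2 * K 1 0 = K 3 0 * K 1 2 := cancel0 ane (by have hz := hR 3 1 2 0; simp only [Fin.reduceEq, reduceIte] at hz; linear_combination hz)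
    have e3 : K 3 2 * K 0 0 = K 3 0 * K 0 2 := cancel0 ane (by have hz := hR 3 0 2 0; simp only [Fin.reduceEq, reduceIte] at hz; linear_combination hz)
    have e4 : K 3 2 * K 1 1 = K 3 1 * K 1 2 := cancel0 ane (by have hz := hR 3 1 2 1; simp only [Fin.reduceEq, reduceIte] at hz; linear_combination hz)
    have e5 : Real.sqrt |g.det| * (K 0 0 * K 1 1 - K 0 1 * K 1 0) = f * Real.sqrt |h.det| := by
      have hz := hR 0 1 0 1; simp only [Fin.reduceEq, reduceIte] at hz; linear_combination hz
    exact offdiag_aux (mul_ne_zero hf bne) e1 e2 e3 e4 e5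
  have q01 : Real.sqrt |g.det| * (K 0 0 * K 1 1) = f * Real.sqrt |h.det| := by
    have hz := hR 0 1 0 1
    simp only [Fin.reduceEq, reduceIte] at hz
    linear_combination hz + Real.sqrt |g.det| * K 1 0 * o01
  have q02 : Real.sqrt |g.det| * (K 0 0 * K 2 2) = f * Real.sqrt |h.det| := by
    have hz := hR 0 2 0 2
    simp only [Fin.reduceEq, reduceIte] at hz
    linear_combination hz + Real.sqrt |g.det| * K 2 0 * o02
  have q03 : Real.sqrt |g.det| * (K 0 0 * K 3 3) = f * Real.sqrt |h.det| := by
    have hz := hR 0 3 0 3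
    simp only [Fin.reduceEq, reduceIte] at hz
    linear_combination hz + Real.sqrt |g.det| * K 3 0 * o03
  have q12 : Real.sqrt |g.det| * (K 1 1 * K 2 2) = f * Real.sqrt |h.det| := by
    have hz := hR 1 2 1 2
    simp only [Fin.reduceEq, reduceIte] at hz
    linear_combination hz + Real.sqrt |g.det| * K 2 1 * o12
  have hK00 : K 0 0 ≠ 0 := by
    intro h0
    apply mul_ne_zero hf bne
    rw [← q01, h0]
    ring
  have hK11 : K 1 1 ≠ 0 := by
    intro h0
    apply mul_ne_zero hf bne
    rw [← q01, h0]
    ring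
  obtain ⟨μ, hμ⟩ : ∃ μ : ℝ, K 0 0 = μ := ⟨_, rfl⟩
  have d22 : K 2 2 = K 0 0 := by
    have hq := q12.trans q01.symm
    have hq' : (Real.sqrt |g.det| * K 1 1) * K 2 2 = (Real.sqrt |g.det| * K 1 1) * K 0 0 := by
      linear_combination hq
    exact mul_left_cancel₀ (mul_ne_zero ane hK11) hq'
  have d11 : K 1 1 = K 0 0 := by
    have hq := q01.trans q02.symm
    have hq' : (Real.sqrt |g.det| * K 0 0) * K 1 1 = (Real.sqrt |g.det| * K 0 0) * K 2 2 := by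
      linear_combination hq
    exact (mul_left_cancel₀ (mul_ne_zero ane hK00) hq').trans d22
  have d33 : K 3 3 = K 0 0 := by
    have hq := q02.trans q03.symm
    have hq' : (Real.sqrt |g.det| * K 0 0) * K 2 2 = (Real.sqrt |g.det| * K 0 0) * K 3 3 := by
      linear_combination hq
    exact (mul_left_cancel₀ (mul_ne_zero ane hK00) hq').symm.trans d22
  have h00 : K 0 0 = μ := hμ
  have h11 : K 1 1 = μ := d11.trans hμ
  have h22 : K 2 2 = μ := d22.trans hμ
  have h33 : K 3 3 = μ := d33.trans hμ
  have hμne : μ ≠ 0 := hμ ▸ hK00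
  have h1 : g * K = h := by
    rw [hKdef, ← Matrix.mul_assoc, Matrix.mul_nonsing_inv g (isUnit_iff_ne_zero.mpr hgd),
      Matrix.one_mul]
  have hgh : h = μ • g := by
    rw [← h1]
    ext i j
    simp only [Matrix.mul_apply, Fin.sum_univ_four, Matrix.smul_apply, smul_eq_mul]
    fin_cases j
    · exact (by linear_combination g i 0 * h00 + g i 1 * o10 + g i 2 * o20 + g i 3 * o30 :
        g i 0 * K 0 0 + g i 1 * K 1 0 + g i 2 * K 2 0 + g i 3 * K 3 0 = μ * g i 0)
    · exact (by linear_combination g i 0 * o01 + g i 1 * h11 + g i 2 * o21 + g i 3 * o31 :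
        g i 0 * K 0 1 + g i 1 * K 1 1 + g i 2 * K 2 1 + g i 3 * K 3 1 = μ * g i 1)
    · exact (by linear_combination g i 0 * o02 + g i 1 * o12 + g i 2 * h22 + g i 3 * o32 :
        g i 0 * K 0 2 + g i 1 * K 1 2 + g i 2 * K 2 2 + g i 3 * K 3 2 = μ * g i 2)
    · exact (by linear_combination g i 0 * o03 + g i 1 * o13 + g i 2 * o23 + g i 3 * h33 :
        g i 0 * K 0 3 + g i 1 * K 1 3 + g i 2 * K 2 3 + g i 3 * K 3 3 = μ * g i 3)
  have hdeth : h.det = μ ^ 4 * g.det := by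
    rw [hgh, Matrix.det_smul]
    norm_num
  have hba : Real.sqrt |h.det| = μ ^ 2 * Real.sqrt |g.det| := by
    have h4 : |μ ^ 4| = (μ ^ 2) ^ 2 := by
      rw [abs_of_nonneg (by positivity : (0:ℝ) ≤ μ ^ 4)]
      ring
    rw [hdeth, abs_mul, h4, Real.sqrt_mul (sq_nonneg _), Real.sqrt_sq (sq_nonneg _)]
  have hf1 : f = 1 := by
    have hq0 : Real.sqrt |g.det| * (K 0 0 * K 1 1) = f * (μ ^ 2 * Real.sqrt |g.det|) := by
      rw [← hba]; exact q01
    have hq : f * (μ ^ 2 * Real.sqrt |g.det|) = 1 * (μ ^ 2 * Real.sqrt |g.det|) := by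
      linear_combination - hq0 + Real.sqrt |g.det| * K 0 0 * h11 + Real.sqrt |g.det| * μ * h00
    exact mul_right_cancel₀ (mul_ne_zero (pow_ne_zero 2 hμne) ane) hq
  refine ⟨hf1, μ⁻¹, inv_ne_zero hμne, ?_⟩
  rw [hgh, smul_smul, inv_mul_cancel₀ hμne, one_smul]
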